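/- A clause γ ∈ Π is conditionally irredundant in Π if and only if there exist assignments ω, ω' with S_Π(ω) \ S_Π(ω') = {γ}. -/

import Mathlib

open scoped Classical

abbrev Clause := Finset (ℕ × Bool)
abbrev Assignment := ℕ → Bool

/-- An assignment satisfies a clause iff it makes some literal true. -/
def satC (ω : Assignment) (c : Clause) : Prop := ∃ l ∈ c, ω l.1 = l.2

/-- An assignment satisfies a CNF (finite set of clauses). -/
def satF (ω : Assignment) (P : Finset Clause) : Prop := ∀ c ∈ P, satC ω c

/-- A CNF entails a clause. -/
def entails (P : Finset Clause) (γ : Clause) : Prop := ∀ ω, satF ω P → satC ω γ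

/-- Two CNFs are (logically) equivalent: same models. -/
def equivF (P Q : Finset Clause) : Prop := ∀ ω, satF ω P ↔ satF ω Q

/-- A clause is non-tautological. -/
def nonTaut (c : Clause) : Prop := ∀ v, ¬((v, true) ∈ c ∧ (v, false) ∈ c)

/-- A CNF is redundant: it is equivalent to a proper subset. -/
def redundantF (P : Finset Clause) : Prop := ∃ Q ⊂ P, equivF Q P

/-- A CNF is irredundant: no clause is entailed by the others. -/
def irredundant (P : Finset Clause) : Prop := ∀ γ ∈ P, ¬ entails (P.erase γ) γ

/-- Q is an irredundant equivalent subset (IES) of P. -/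
def IES (P Q : Finset Clause) : Prop := Q ⊆ P ∧ equivF Q P ∧ irredundant Q

/-- A set of clauses is consistent with a formula Γ. -/
def consistentWith (Q : Finset Clause) (Γ : Assignment → Prop) : Prop :=
  ∃ ω, Γ ω ∧ satF ω Q

/-- Q is a maximal subset of P consistent with Γ. -/
def maxCons (P : Finset Clause) (Γ : Assignment → Prop) (Q : Finset Clause) : Prop :=
  Q ⊆ P ∧ consistentWith Q Γ ∧ ∀ R, Q ⊂ R → R ⊆ P → ¬ consistentWith R Γ

/-- ω is a model of the revision P * Γ = ⋁_{Q ∈ Max(P,Γ)} (⋀Q ∧ Γ). -/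
def revSat (P : Finset Clause) (Γ : Assignment → Prop) (ω : Assignment) : Prop :=
  ∃ Q, maxCons P Γ Q ∧ Γ ω ∧ satF ω Q

/-- S_P(ω): the clauses of P satisfied by ω. -/
noncomputable def SP (P : Finset Clause) (ω : Assignment) : Finset Clause :=
  P.filter fun γ => satC ω γ

/-- Conditional (strong) equivalence: same result under every revision. -/
def condEquiv (P P' : Finset Clause) : Prop :=
  ∀ Γ : Assignment → Prop, ∀ ω, revSat P Γ ω ↔ revSat P' Γ ω

/-!
Write `𝒮_Γ` for the family of sets `S_Π(α)` with `α ⊨ Γ`. The maximal `Γ`-consistent subsets of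
`Π` are exactly the `⊆`-maximal members of `𝒮_Γ`, and `ω ⊨ Π * Γ` iff `ω ⊨ Γ` and `S_Π(ω)`
contains one of them; deleting `γ` from `Π` replaces each `S ∈ 𝒮_Γ` by `S \ {γ}`.
If no pair of assignments has `S_Π(ω) \ S_Π(ω') = {γ}`, then `S \ {γ} ⊆ T \ {γ}` forces `S ⊆ T`
for such sets, so deleting `γ` is an order embedding and the two revisions agree.
Conversely, such a pair makes the revisions by `Γ = {ω, ω'}` differ: at `ω'` if
`S_Π(ω') ⊆ S_Π(ω)`, and at `ω` otherwise.
-/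

lemma Finset.sdiff_eq_singleton_iff {α : Type*} [DecidableEq α] {s t : Finset α} {a : α} :
    s \ t = {a} ↔ a ∈ s ∧ a ∉ t ∧ s.erase a ⊆ t := by
  simp only [Finset.eq_singleton_iff_unique_mem, Finset.mem_sdiff, Finset.subset_iff,
    Finset.mem_erase]
  grind

lemma Finset.subset_of_erase_subset_erase {α : Type*} [DecidableEq α] {s t : Finset α} {a : α}
    (h : s.erase a ⊆ t.erase a) (hst : s \ t ≠ {a}) : s ⊆ t := by
  have hst' : s.erase a ⊆ t := h.trans (Finset.erase_subset a t)
  intro x hxs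
  by_contra hxt
  obtain rfl : x = a := by
    by_contra hxa
    exact hxt (hst' (Finset.mem_erase.2 ⟨hxa, hxs⟩))
  exact hst (Finset.sdiff_eq_singleton_iff.2 ⟨hxs, hxt, hst'⟩)

lemma maximal_mem_pair_iff {α : Type*} [PartialOrder α] {a b x : α} :
    Maximal (· ∈ ({a, b} : Set α)) x ↔ x = a ∧ ¬ a < b ∨ x = b ∧ ¬ b < a := by
  simp only [Maximal, Set.mem_insert_iff, Set.mem_singleton_iff, forall_eq_or_imp, forall_eq,
    not_lt_iff_le_imp_ge]
  grind

section Revision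

variable {P : Finset Clause} {Γ : Assignment → Prop} {ω : Assignment}

lemma SP_subset : SP P ω ⊆ P :=
  Finset.filter_subset _ _

lemma satF_iff_subset_SP {Q : Finset Clause} (hQ : Q ⊆ P) : satF ω Q ↔ Q ⊆ SP P ω :=
  ⟨fun h _ hc => Finset.mem_filter.2 ⟨hQ hc, h _ hc⟩, fun h _ hc => (Finset.mem_filter.1 (h hc)).2⟩

lemma SP_erase (γ : Clause) : SP (P.erase γ) ω = (SP P ω).erase γ :=
  Finset.filter_erase _ _ _

lemma satF_SP : satF ω (SP P ω) :=
  (satF_iff_subset_SP SP_subset).2 subset_rfl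

lemma maxCons_iff_maximal {Q : Finset Clause} :
    maxCons P Γ Q ↔ Maximal (· ∈ SP P '' {α | Γ α}) Q := by
  constructor
  · rintro ⟨hQP, ⟨α, hα, hαQ⟩, hmax⟩
    have hQ : ∀ β, Γ β → Q ⊆ SP P β → SP P β ⊆ Q := fun β hβ hQβ => by
      by_contra hβQ
      exact hmax _ (ssubset_of_subset_not_subset hQβ hβQ) SP_subset ⟨β, hβ, satF_SP⟩
    rw [satF_iff_subset_SP hQP] at hαQ
    refine ⟨⟨α, hα, (hQ α hα hαQ).antisymm hαQ⟩, ?_⟩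
    rintro _ ⟨β, hβ, rfl⟩
    exact hQ β hβ
  · rintro ⟨⟨α, hα, rfl⟩, hmax⟩
    refine ⟨SP_subset, ⟨α, hα, satF_SP⟩, fun R hαR hRP ⟨β, hβ, hβR⟩ => ?_⟩
    rw [satF_iff_subset_SP hRP] at hβR
    exact hαR.not_subset (hβR.trans (hmax ⟨β, hβ, rfl⟩ (hαR.subset.trans hβR)))

lemma revSat_iff :
    revSat P Γ ω ↔ Γ ω ∧ ∃ Q, Maximal (· ∈ SP P '' {α | Γ α}) Q ∧ Q ⊆ SP P ω := by
  simp only [revSat, maxCons_iff_maximal]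
  constructor
  · rintro ⟨Q, hQ, hω, hωQ⟩
    obtain ⟨α, -, rfl⟩ := hQ.prop
    exact ⟨hω, _, hQ, (satF_iff_subset_SP SP_subset).1 hωQ⟩
  · rintro ⟨hω, Q, hQ, hQω⟩
    exact ⟨Q, hQ, hω, fun c hc => satF_SP c (hQω hc)⟩

lemma revSat_pair_iff {ω₁ ω₂ : Assignment} :
    revSat P (· ∈ ({ω₁, ω₂} : Set Assignment)) ω ↔ (ω = ω₁ ∨ ω = ω₂) ∧
      (¬ SP P ω₁ ⊂ SP P ω₂ ∧ SP P ω₁ ⊆ SP P ω ∨ ¬ SP P ω₂ ⊂ SP P ω₁ ∧ SP P ω₂ ⊆ SP P ω) := by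
  rw [revSat_iff, Set.ofPred_mem_eq, Set.image_pair]
  simp only [maximal_mem_pair_iff]
  simp only [or_and_right, exists_or, and_assoc, exists_eq_left, Set.mem_insert_iff,
    Set.mem_singleton_iff]

lemma condEquiv_erase_of_forall_sdiff_ne {γ : Clause} (h : ∀ ω ω', SP P ω \ SP P ω' ≠ {γ}) :
    condEquiv P (P.erase γ) := by
  intro Γ ω
  have herase : ∀ α β, (SP P α).erase γ ⊆ (SP P β).erase γ ↔ SP P α ⊆ SP P β := fun α β =>
    ⟨fun hαβ => Finset.subset_of_erase_subset_erase hαβ (h α β), Finset.erase_subset_erase γ⟩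
  have hmono : ∀ ⦃S T⦄, S ∈ SP P '' {α | Γ α} → T ∈ SP P '' {α | Γ α} →
      (S.erase γ ≤ T.erase γ ↔ S ≤ T) := by
    rintro _ _ ⟨α, -, rfl⟩ ⟨β, -, rfl⟩
    exact herase α β
  have himage : SP (P.erase γ) '' {α | Γ α} = (·.erase γ) '' (SP P '' {α | Γ α}) := by
    simp only [Set.image_image, SP_erase]
  rw [revSat_iff, revSat_iff, himage, SP_erase]
  refine and_congr_right fun _ => ⟨?_, ?_⟩
  · rintro ⟨Q, hQ, hQω⟩
    exact ⟨_, (maximal_mem_image_monotone_iff hQ.prop hmono).2 hQ, Finset.erase_subset_erase γ hQω⟩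
  · rintro ⟨_, hQ, hQω⟩
    obtain ⟨_, ⟨α, hα, rfl⟩, rfl⟩ := hQ.prop
    exact ⟨_, (maximal_mem_image_monotone_iff (Set.mem_image_of_mem (SP P) hα) hmono).1 hQ,
      (herase α ω).1 hQω⟩

lemma not_condEquiv_erase_of_sdiff_eq_singleton {γ : Clause} {ω' : Assignment}
    (h : SP P ω \ SP P ω' = {γ}) : ¬ condEquiv P (P.erase γ) := by
  obtain ⟨hγω, hγω', hsub⟩ := Finset.sdiff_eq_singleton_iff.1 h
  have hωω' : ¬ SP P ω ⊆ SP P ω' := fun h => hγω' (h hγω)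
  intro hce
  have hrev := hce (· ∈ ({ω, ω'} : Set Assignment))
  simp only [revSat_pair_iff, SP_erase] at hrev
  by_cases hω'ω : SP P ω' ⊆ SP P ω
  · have hrev' := hrev ω'
    rw [Finset.erase_eq_of_notMem hγω',
      hsub.antisymm (Finset.subset_erase.2 ⟨hω'ω, hγω'⟩)] at hrev'
    obtain ⟨-, h | h⟩ := hrev'.mpr ⟨.inr rfl, .inl ⟨ssubset_irrefl _, subset_rfl⟩⟩
    · exact hωω' h.2
    · exact h.1 (ssubset_of_subset_not_subset hω'ω hωω')
  · have hω'erase : ¬ SP P ω' ⊆ (SP P ω).erase γ :=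
      fun h => hω'ω (h.trans (Finset.erase_subset _ _))
    rw [Finset.erase_eq_of_notMem hγω'] at hrev
    obtain ⟨-, h | h⟩ := (hrev ω).mp ⟨.inl rfl, .inl ⟨fun h => hωω' h.subset, subset_rfl⟩⟩
    · exact h.1 (ssubset_of_subset_not_subset hsub hω'erase)
    · exact hω'erase h.2

end Revision

theorem condIrredundant_iff_diff_singleton_general (P : Finset Clause) (γ : Clause) :
    ¬ condEquiv P (P.erase γ) ↔
      ∃ ω ω' : Assignment, SP P ω \ SP P ω' = {γ} := by
  refine ⟨fun h => ?_, fun ⟨ω, ω', h⟩ => not_condEquiv_erase_of_sdiff_eq_singleton h⟩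
  by_contra! hne
  exact h (condEquiv_erase_of_forall_sdiff_ne hne)

/-- γ ∈ P is conditionally irredundant in P iff there are assignments ω, ω'
with S_P(ω) \ S_P(ω') = {γ}. -/
theorem condIrredundant_iff_diff_singleton (P : Finset Clause) (γ : Clause) (hγ : γ ∈ P) :
    ¬ condEquiv P (P.erase γ) ↔
      ∃ ω ω' : Assignment, SP P ω \ SP P ω' = {γ} :=
  condIrredundant_iff_diff_singleton_general P γ
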